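/- Let k ≥ 1 be an integer, let χ be a Dirichlet character modulo a positive integer N, and let r = ∏_p p^{α_p} be a positive integer. For all complex s with Re(s) > 1, ∑_{m=1}^∞ d_k(rm) χ(m) m^{-s} = g_k(s, r, χ) L(s, χ)^k, where L(s, χ) is the Dirichlet L-function of χ and g_k(s, r, χ) = ∏_{p | r} ( (1 - χ(p) p^{-s})^k ∑_{j=0}^∞ d_k(p^{j+α_p}) χ(p^j) p^{-js} ). -/

import Mathlib

/-!
For `r ≠ 0` and `k ≥ 1` we have `d_k(r) ≠ 0`, and `m ↦ d_k(rm) / d_k(r)` is multiplicative because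
every multiplicative `f` satisfies `f(x) f(y) = f(lcm x y) f(gcd x y)`. Twisting it by the
completely multiplicative `χ(m) m^{-s}`, taking the Euler product and multiplying back by
`d_k(r) = ∏_p d_k(p^{α_p})` gives
`∑_m d_k(rm) χ(m) m^{-s} = ∏_p ∑_j d_k(p^{j+α_p}) (χ(p) p^{-s})^j`.
Since `∑_j d_k(p^j) x^j = (1 - x)^{-k}`, the factors at `p ∤ r` are those of the Euler product of
`L(s, χ)^k`, and at `p ∣ r` they differ from those exactly by the factors of `g_k(s, r, χ)`.
-/

/-- The `k`-th divisor function `d_k`, the `k`-fold Dirichlet convolution of the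
constant function `1`. -/
noncomputable def dk (k : ℕ) : ArithmeticFunction ℕ := ArithmeticFunction.zeta ^ k

/-- The twisted local factor
`g_k(s, r, χ) = ∏_{p | r} (1 - χ(p) p^{-s})^k ∑_{j≥0} d_k(p^{j+α_p}) χ(p^j) p^{-js}`,
where `r = ∏_p p^{α_p}`. -/
noncomputable def gkChi (k : ℕ) {N : ℕ} (χ : DirichletCharacter ℂ N) (s : ℂ) (r : ℕ) : ℂ :=
  ∏ p ∈ r.primeFactors,
    ((1 - χ p * (p : ℂ) ^ (-s)) ^ k *
      ∑' j : ℕ, (dk k (p ^ (j + r.factorization p)) : ℂ) * χ ((p : ZMod N) ^ j) *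
        (p : ℂ) ^ (-(j : ℂ) * s))

open ArithmeticFunction Nat

lemma hasProd_primes_prod_primeFactors {M : Type*} [CommMonoid M] [TopologicalSpace M]
    {n : ℕ} {g : ℕ → M} (hg : ∀ p : Primes, ¬ (p : ℕ) ∣ n → g p = 1) (hn : n ≠ 0) :
    HasProd (fun p : Primes ↦ g p) (∏ p ∈ n.primeFactors, g p) := by
  classical
  rw [← Finset.prod_filter_of_ne (p := Nat.Prime) fun p hp _ ↦ prime_of_mem_primeFactors hp,
    ← Finset.prod_subtype_eq_prod_filter]
  refine hasProd_prod_of_ne_finset_one fun p hp ↦ hg p fun hdvd ↦ hp ?_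
  exact Finset.mem_subtype.mpr (mem_primeFactors.mpr ⟨p.prop, hdvd, hn⟩)

namespace ArithmeticFunction.IsMultiplicative

section CommMonoidWithZero

variable {R : Type*} [CommMonoidWithZero R] {a : ArithmeticFunction R}

lemma hasProd_apply_prime_pow_factorization [TopologicalSpace R] (ha : a.IsMultiplicative)
    {n : ℕ} (hn : n ≠ 0) :
    HasProd (fun p : Primes ↦ a ((p : ℕ) ^ n.factorization p)) (a n) := by
  rw [ha.multiplicative_factorization a hn, prod_factorization_eq_prod_primeFactors]
  refine hasProd_primes_prod_primeFactors (fun p hp ↦ ?_) hn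
  rw [factorization_eq_zero_of_not_dvd hp, pow_zero, ha.map_one]

lemma map_mul_mul_mul_map_of_coprime (ha : a.IsMultiplicative) (r : ℕ) {m n : ℕ}
    (hmn : m.Coprime n) : a (r * (m * n)) * a r = a (r * m) * a (r * n) := by
  rw [← ha.lcm_apply_mul_gcd_apply (x := r * m), Nat.lcm_mul_left, Nat.gcd_mul_left,
    hmn.lcm_eq_mul, hmn.gcd_eq_one, mul_one]

lemma map_prime_pow_add_factorization_mul_map (ha : a.IsMultiplicative) {p r : ℕ}
    (hp : p.Prime) (hr : r ≠ 0) (e : ℕ) :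
    a (p ^ (e + r.factorization p)) * a r = a (p ^ r.factorization p) * a (r * p ^ e) := by
  have hco : (p ^ r.factorization p).Coprime (r / p ^ r.factorization p) :=
    (coprime_ordCompl hp hr).pow_left _
  have hco' : (p ^ (e + r.factorization p)).Coprime (r / p ^ r.factorization p) :=
    (coprime_ordCompl hp hr).pow_left _
  have hrp : r * p ^ e = p ^ (e + r.factorization p) * (r / p ^ r.factorization p) := by
    conv_lhs => rw [← ordProj_mul_ordCompl_eq_self r p]
    ring
  calc a (p ^ (e + r.factorization p)) * a r
      = a (p ^ (e + r.factorization p)) * (a (p ^ r.factorization p) *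
          a (r / p ^ r.factorization p)) := by
        rw [← ha.map_mul_of_coprime hco, ordProj_mul_ordCompl_eq_self]
    _ = a (p ^ r.factorization p) * a (r * p ^ e) := by
        rw [hrp, ha.map_mul_of_coprime hco', mul_left_comm]

end CommMonoidWithZero

theorem eulerProduct_comp_mul_left_hasProd {F : Type*} [NormedField F] [CompleteSpace F]
    {a : ArithmeticFunction F} (ha : a.IsMultiplicative) (f : ℕ →*₀ F) {r : ℕ} (hr : r ≠ 0)
    (har : a r ≠ 0) (hsum : Summable fun m ↦ ‖a (r * m) * f m‖) :
    HasProd (fun p : Primes ↦ ∑' e, a ((p : ℕ) ^ (e + r.factorization p)) * f p ^ e)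
      (∑' m, a (r * m) * f m) := by
  -- normalized so that `G 1 = 1`, as the Euler product requires
  set G : ℕ → F := fun m ↦ a (r * m) / a r * f m
  have hG1 : G 1 = 1 := by simp [G, har]
  have hGmul {m n : ℕ} (hmn : m.Coprime n) : G (m * n) = G m * G n := by
    simp only [G, map_mul]
    field_simp
    linear_combination (f m * f n) * ha.map_mul_mul_mul_map_of_coprime r hmn
  have hGsum : Summable (‖G ·‖) := by
    refine (hsum.mul_left ‖a r‖⁻¹).congr fun m ↦ ?_
    simp only [G, norm_mul, norm_div]
    ring
  have hG0 : G 0 = 0 := by simp [G]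
  have hlocal (p : Primes) : a ((p : ℕ) ^ r.factorization p) * ∑' e, G ((p : ℕ) ^ e) =
      ∑' e, a ((p : ℕ) ^ (e + r.factorization p)) * f p ^ e := by
    rw [← tsum_mul_left]
    refine tsum_congr fun e ↦ ?_
    simp only [G, map_pow]
    field_simp
    linear_combination f p ^ e * (ha.map_prime_pow_add_factorization_mul_map p.prop hr e).symm
  have hglobal : a r * ∑' m, G m = ∑' m, a (r * m) * f m := by
    rw [← tsum_mul_left]
    refine tsum_congr fun m ↦ ?_
    simp only [G]
    field_simp
  simpa only [hlocal, hglobal] using (ha.hasProd_apply_prime_pow_factorization hr).mul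
    (EulerProduct.eulerProduct_hasProd hG1 hGmul hGsum hG0)

end ArithmeticFunction.IsMultiplicative

lemma dk_isMultiplicative (k : ℕ) : (dk k).IsMultiplicative :=
  isMultiplicative_zeta.pow

lemma dk_zero : dk 0 = 1 := pow_zero _

lemma dk_succ (k : ℕ) : dk (k + 1) = dk k * zeta :=
  pow_succ zeta k

lemma dk_succ_apply_prime_pow (k : ℕ) {p : ℕ} (hp : p.Prime) (e : ℕ) :
    dk (k + 1) (p ^ e) = (e + k).choose k := by
  induction k generalizing e with
  | zero => simp [dk, hp.ne_zero]
  | succ k ih =>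
    rw [dk_succ, mul_zeta_apply, sum_divisors_prime_pow hp, Finset.sum_congr rfl fun i _ ↦ ih i,
      sum_range_add_choose, add_assoc]

lemma dk_apply_pos {k n : ℕ} (hk : k ≠ 0) (hn : n ≠ 0) : 0 < dk k n := by
  obtain ⟨k, rfl⟩ := exists_eq_succ_of_ne_zero hk
  rw [(dk_isMultiplicative _).multiplicative_factorization _ hn]
  refine Finset.prod_pos fun p hp ↦ ?_
  dsimp only
  rw [dk_succ_apply_prime_pow k (prime_of_mem_primeFactors (support_factorization n ▸ hp))]
  exact choose_pos (le_add_left _ _)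

lemma tsum_dk_prime_pow_mul_pow {𝕜 : Type*} [NormedField 𝕜] [CompleteSpace 𝕜] (k : ℕ) {p : ℕ}
    (hp : p.Prime) {x : 𝕜} (hx : ‖x‖ < 1) :
    ∑' e, (dk k (p ^ e) : 𝕜) * x ^ e = ((1 - x)⁻¹) ^ k := by
  cases k with
  | zero =>
    rw [tsum_eq_single 0 fun e he ↦ by simp [dk_zero, one_apply, hp.ne_one, he]]
    simp [dk_zero]
  | succ k =>
    simp only [dk_succ_apply_prime_pow k hp, tsum_choose_mul_geometric_of_norm_lt_one k hx,
      one_div, inv_pow]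

lemma LSeriesSummable_dk (k : ℕ) {s : ℂ} (hs : 1 < s.re) :
    LSeriesSummable (fun n ↦ (dk k n : ℂ)) s := by
  induction k with
  | zero =>
    refine summable_of_ne_finset_zero (s := {1}) fun n hn ↦ ?_
    simp_all [LSeries.term, dk_zero, one_apply]
  | succ k ih =>
    have h := LSeriesSummable_mul (f := dk k) (g := zeta) (by simpa using ih)
      (LSeriesSummable_zeta_iff.mpr hs)
    simpa [← natCoe_mul, ← dk_succ] using h

lemma LSeriesSummable.comp_mul_left {f : ℕ → ℂ} {s : ℂ} (hf : LSeriesSummable f s) {r : ℕ}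
    (hr : r ≠ 0) : LSeriesSummable (fun m ↦ f (r * m)) s := by
  refine ((hf.comp_injective (mul_right_injective₀ hr)).mul_left ((r : ℂ) ^ s)).congr fun m ↦ ?_
  rcases eq_or_ne m 0 with rfl | hm
  · simp
  · have hrs : (r : ℂ) ^ s ≠ 0 := by simp [hr]
    simp only [Function.comp_apply, LSeries.term_of_ne_zero hm,
      LSeries.term_of_ne_zero (mul_ne_zero hr hm), Nat.cast_mul, Complex.natCast_mul_natCast_cpow]
    field_simp

lemma DirichletCharacter.norm_apply_mul_cpow_neg_lt_one {N : ℕ} (χ : DirichletCharacter ℂ N)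
    {s : ℂ} (hs : 1 < s.re) {n : ℕ} (hn : 1 < n) : ‖χ n * (n : ℂ) ^ (-s)‖ < 1 := by
  grw [norm_mul, χ.norm_le_one, Complex.norm_natCast_cpow_of_pos (by omega), Complex.neg_re,
    one_mul]
  exact Real.rpow_lt_one_of_one_lt_of_neg (mod_cast hn) (by linarith)

lemma summable_norm_dk_mul_dirichletSummandHom (k : ℕ) {N : ℕ} (χ : DirichletCharacter ℂ N)
    {s : ℂ} (hs : 1 < s.re) {r : ℕ} (hr : r ≠ 0) :
    Summable fun m ↦
      ‖(dk k (r * m) : ℂ) * dirichletSummandHom χ (Complex.ne_zero_of_one_lt_re hs) m‖ := by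
  refine (χ.LSeriesSummable_mul ((LSeriesSummable_dk k hs).comp_mul_left hr)).norm.congr
    fun m ↦ ?_
  rw [LSeries.term_def₀ (by simp)]
  simp only [dirichletSummandHom, MonoidWithZeroHom.coe_mk, ZeroHom.coe_mk, Pi.mul_apply]
  ring_nf

lemma hasProd_gkChi (k : ℕ) {N : ℕ} (χ : DirichletCharacter ℂ N) {s : ℂ} (hs : 1 < s.re)
    {r : ℕ} (hr : r ≠ 0) :
    HasProd (fun p : Primes ↦ (1 - χ p * (p : ℂ) ^ (-s)) ^ k *
      ∑' j, (dk k ((p : ℕ) ^ (j + r.factorization p)) : ℂ) * (χ p * (p : ℂ) ^ (-s)) ^ j)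
      (gkChi k χ s r) := by
  have hpow (p j : ℕ) : χ ((p : ZMod N) ^ j) * (p : ℂ) ^ (-(j : ℂ) * s) =
      (χ p * (p : ℂ) ^ (-s)) ^ j := by
    rw [map_pow, neg_mul, ← mul_neg, Complex.cpow_nat_mul, mul_pow]
  simp only [gkChi, mul_assoc, hpow]
  refine hasProd_primes_prod_primeFactors (fun p hp ↦ ?_) hr
  have hx := χ.norm_apply_mul_cpow_neg_lt_one hs p.prop.one_lt
  simp only [factorization_eq_zero_of_not_dvd hp, add_zero]
  rw [tsum_dk_prime_pow_mul_pow k p.prop hx, ← mul_pow,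
    mul_inv_cancel₀ (isUnit_one_sub_of_norm_lt_one hx).ne_zero, one_pow]

theorem tsum_dk_chi_eq_gkChi_mul_L_pow_general (k : ℕ) (hk : 1 ≤ k) {N : ℕ}
    (χ : DirichletCharacter ℂ N) (r : ℕ) (hr : 1 ≤ r) (s : ℂ) (hs : 1 < s.re) :
    ∑' m : ℕ, (dk k (r * m) : ℂ) * χ m * (m : ℂ) ^ (-s) =
      gkChi k χ s r * (∑' n : ℕ, χ n * (n : ℂ) ^ (-s)) ^ k := by
  have hr0 : r ≠ 0 := by omega
  have hdk : ((dk k : ArithmeticFunction ℂ) r) ≠ 0 := by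
    simpa using (dk_apply_pos (by omega) hr0).ne'
  have hlhs := (dk_isMultiplicative k).natCast.eulerProduct_comp_mul_left_hasProd
    (dirichletSummandHom χ (Complex.ne_zero_of_one_lt_re hs)) hr0 hdk
    (by simpa using summable_norm_dk_mul_dirichletSummandHom k χ hs hr0)
  have hrhs := (hasProd_gkChi k χ hs hr0).mul ((χ.LSeries_eulerProduct_hasProd hs).pow k)
  rw [← tsum_dirichletSummand χ hs] at hrhs
  have hlocal (p : Primes) :
      ∑' e, (dk k : ArithmeticFunction ℂ) ((p : ℕ) ^ (e + r.factorization p)) *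
        dirichletSummandHom χ (Complex.ne_zero_of_one_lt_re hs) p ^ e =
      (1 - χ p * (p : ℂ) ^ (-s)) ^ k *
        (∑' j, (dk k ((p : ℕ) ^ (j + r.factorization p)) : ℂ) * (χ p * (p : ℂ) ^ (-s)) ^ j) *
          ((1 - χ p * (p : ℂ) ^ (-s))⁻¹) ^ k := by
    have hx := χ.norm_apply_mul_cpow_neg_lt_one hs p.prop.one_lt
    rw [mul_right_comm, ← mul_pow, mul_inv_cancel₀ (isUnit_one_sub_of_norm_lt_one hx).ne_zero,
      one_pow, one_mul]
    rfl
  calc ∑' m : ℕ, (dk k (r * m) : ℂ) * χ m * (m : ℂ) ^ (-s)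
      = ∑' m : ℕ, (dk k : ArithmeticFunction ℂ) (r * m) *
          dirichletSummandHom χ (Complex.ne_zero_of_one_lt_re hs) m :=
        tsum_congr fun m ↦ by simp [dirichletSummandHom, mul_assoc]
    _ = gkChi k χ s r * (∑' n : ℕ, χ n * (n : ℂ) ^ (-s)) ^ k :=
        hlhs.unique (funext hlocal ▸ hrhs)

/-- For `Re(s) > 1`,
`∑_{m≥1} d_k(rm) χ(m) m^{-s} = g_k(s, r, χ) L(s, χ)^k`, where
`L(s, χ) = ∑_{n≥1} χ(n) n^{-s}` is the Dirichlet `L`-function of `χ`. -/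
theorem tsum_dk_chi_eq_gkChi_mul_L_pow (k : ℕ) (hk : 1 ≤ k) {N : ℕ} (hN : 0 < N)
    (χ : DirichletCharacter ℂ N) (r : ℕ) (hr : 1 ≤ r) (s : ℂ) (hs : 1 < s.re) :
    ∑' m : ℕ, (dk k (r * m) : ℂ) * χ m * (m : ℂ) ^ (-s) =
      gkChi k χ s r * (∑' n : ℕ, χ n * (n : ℂ) ^ (-s)) ^ k :=
  tsum_dk_chi_eq_gkChi_mul_L_pow_general k hk χ r hr s hs
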